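/- arXiv:1612.04492 — 2 statements merged into one kernel-verified Lean document; each statement's English description precedes it below -/
import Mathlib

section
/- Let H be a complex Hilbert space and let a, b, c be bounded linear operators on H. If a and b are normal (a*a = aa* and b*b = bb*) and ac = cb, then a*c = cb* (the Fuglede–Putnam theorem). -/
/-- **The Fuglede–Putnam theorem.** Let `H` be a complex Hilbert space and let `a, b, c`
be bounded linear operators on `H`. If `a` and `b` are normal (`a* a = a a*` and
`b* b = b b*`, where `star` is the Hilbert-space adjoint) and `a c = c b`, then
`a* c = c b*`. -/
theorem fuglede_putnam_bounded {H : Type*} [NormedAddCommGroup H]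
    [InnerProductSpace ℂ H] [CompleteSpace H]
    (a b c : H →L[ℂ] H)
    (hna : star a * a = a * star a) (hnb : star b * b = b * star b)
    (h : a * c = c * b) :
    star a * c = c * star b :=
  (SemiconjBy.star_right ⟨hnb⟩ ⟨hna⟩ h.symm).eq.symm
end

section
/- Let H be a complex Hilbert space, let a be a normal bounded linear operator on H, and let p be an orthogonal projection on H with finite-dimensional range. If ap = pap, then ap = pa. -/
open scoped InnerProductSpace ComplexConjugate

/-- Trace of an endomorphism of a finite-dimensional inner product space as a sum of
diagonal inner products against an orthonormal basis. -/
lemma trace_eq_sum_inner' {E : Type*} [NormedAddCommGroup E] [InnerProductSpace ℂ E]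
    [FiniteDimensional ℂ E] (f : E →ₗ[ℂ] E) :
    LinearMap.trace ℂ E f = ∑ i, ⟪(stdOrthonormalBasis ℂ E) i, f ((stdOrthonormalBasis ℂ E) i)⟫_ℂ := by
  set e := stdOrthonormalBasis ℂ E
  rw [LinearMap.trace_eq_matrix_trace ℂ e.toBasis, Matrix.trace]
  congr 1
  ext i
  rw [Matrix.diag_apply, LinearMap.toMatrix_apply, e.coe_toBasis_repr_apply,
    e.repr_apply_apply, e.coe_toBasis]

/-- Let `H` be a complex Hilbert space, `a` a normal bounded operator on `H` and `p` an
orthogonal projection (`p = p² = p*`) with finite-dimensional range. If `a p = p a p`,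
then `a p = p a`. -/
theorem normal_commutes_with_finite_rank_projection {H : Type*} [NormedAddCommGroup H]
    [InnerProductSpace ℂ H] [CompleteSpace H]
    (a p : H →L[ℂ] H)
    (hna : star a * a = a * star a)
    (hidem : IsIdempotentElem p) (hsa : IsSelfAdjoint p)
    (hfin : FiniteDimensional ℂ (LinearMap.range p.toLinearMap))
    (h : a * p = p * a * p) :
    a * p = p * a := by
  have hpp : p * p = p := hidem
  have hp : star p = p := hsa
  set q : H →L[ℂ] H := (1 - p) * star a * p with hqdef
  have hstarq : star q = p * a * (1 - p) := by
    simp only [hqdef, star_mul, star_sub, star_one, hp, star_star]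
    noncomm_ring
  -- (1-p) * (a*p) = 0
  have hzero : (1 - p) * (a * p) = 0 := by
    rw [h]
    calc (1 - p) * (p * a * p) = p * a * p - (p * p) * a * p := by noncomm_ring
    _ = 0 := by rw [hpp]; abel
  have hpap : p * (a * p) = a * p := by
    have h1 : (1 - p) * (a * p) = a * p - p * (a * p) := by noncomm_ring
    rw [h1] at hzero
    have := sub_eq_zero.mp hzero
    exact this.symm
  -- key identity
  have hcb : (p * star a * p) * (p * a * p) = p * (star a * a) * p := by
    calc (p * star a * p) * (p * a * p) = p * star a * (p * (p * (a * p))) := by noncomm_ring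
    _ = p * star a * (a * p) := by simp only [hpap]
    _ = p * (star a * a) * p := by noncomm_ring
  have h1p : (1 - p) * ((1 - p) : H →L[ℂ] H) = 1 - p := by
    calc (1 - p) * ((1 - p) : H →L[ℂ] H) = 1 - p - p + p * p := by noncomm_ring
    _ = 1 - p := by rw [hpp]; abel
  have hbcmul : (p * a * p) * (p * star a * p) = p * a * p * star a * p := by
    calc (p * a * p) * (p * star a * p) = p * a * (p * p) * star a * p := by noncomm_ring
    _ = p * a * p * star a * p := by rw [hpp]
  have hbc : (p * a * p) * (p * star a * p) + star q * q = p * (a * star a) * p := by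
    have h1 : star q * q = p * a * (1 - p) * star a * p := by
      calc star q * q = p * a * ((1 - p) * (1 - p)) * star a * p := by
            rw [hstarq, hqdef]; noncomm_ring
      _ = p * a * (1 - p) * star a * p := by rw [h1p]
    rw [h1, hbcmul]
    noncomm_ring
  have key : star q * q = (p * star a * p) * (p * a * p) - (p * a * p) * (p * star a * p) := by
    calc star q * q
        = ((p * a * p) * (p * star a * p) + star q * q) - (p * a * p) * (p * star a * p) := by
          abel
    _ = (p * star a * p) * (p * a * p) - (p * a * p) * (p * star a * p) := by
          rw [hbc, ← hna, ← hcb]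
  -- pass to the range of p
  set M := LinearMap.range p.toLinearMap with hM
  haveI : FiniteDimensional ℂ M := hfin
  -- compression of operators to M
  set r : (H →L[ℂ] H) → (M →ₗ[ℂ] M) := fun t =>
    LinearMap.codRestrict M ((p.toLinearMap.comp t.toLinearMap).comp M.subtype)
      (fun x => LinearMap.mem_range_self _ _) with hr
  have hr_apply : ∀ (t : H →L[ℂ] H) (x : M), ((r t x : M) : H) = p (t (x : H)) := by
    intro t x; rfl
  have hr_comp : ∀ s t : H →L[ℂ] H, p * t = t → r (s * t) = (r s) ∘ₗ (r t) := by
    intro s t ht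
    ext x
    have h1 : p (t (x : H)) = t (x : H) := by
      have := congrFun (congrArg DFunLike.coe ht) (x : H)
      simpa using this
    simp only [LinearMap.comp_apply]
    rw [hr_apply, hr_apply, hr_apply, h1]
    rfl
  have hr_sub : ∀ s t : H →L[ℂ] H, r (s - t) = r s - r t := by
    intro s t
    ext x
    simp only [LinearMap.sub_apply, Submodule.coe_sub]
    rw [hr_apply, hr_apply, hr_apply]
    simp
  have hpb : p * (p * a * p) = p * a * p := by
    calc p * (p * a * p) = (p * p) * a * p := by noncomm_ring
    _ = p * a * p := by rw [hpp]
  have hpc : p * (p * star a * p) = p * star a * p := by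
    calc p * (p * star a * p) = (p * p) * star a * p := by noncomm_ring
    _ = p * star a * p := by rw [hpp]
  have htrace0 : LinearMap.trace ℂ M (r (star q * q)) = 0 := by
    rw [key, hr_sub, hr_comp _ _ hpb, hr_comp _ _ hpc, map_sub, sub_eq_zero]
    have := LinearMap.trace_mul_comm ℂ (r (p * star a * p)) (r (p * a * p))
    simpa [Module.End.mul_eq_comp] using this
  -- hence q vanishes on M
  have hq0 : ∀ x : M, q (x : H) = 0 := by
    have heach : ∀ i, ⟪(stdOrthonormalBasis ℂ M) i,
        (r (star q * q)) ((stdOrthonormalBasis ℂ M) i)⟫_ℂ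
        = ((‖q (((stdOrthonormalBasis ℂ M) i : M) : H)‖ : ℂ)) ^ 2 := by
      intro i
      set x : M := (stdOrthonormalBasis ℂ M) i with hx
      have h1 : ⟪x, (r (star q * q)) x⟫_ℂ = ⟪(x : H), ((r (star q * q)) x : H)⟫_ℂ := rfl
      rw [h1, hr_apply]
      have hpqq : p * (star q * q) = star q * q := by
        calc p * (star q * q) = (p * p) * a * (1 - p) * q := by rw [hstarq]; noncomm_ring
        _ = p * a * (1 - p) * q := by rw [hpp]
        _ = star q * q := by rw [hstarq]
      have h3 : p ((star q * q) (x : H)) = (star q * q) (x : H) := by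
        have := congrFun (congrArg DFunLike.coe hpqq) (x : H)
        simpa using this
      have h2 : (star q * q) (x : H) = (ContinuousLinearMap.adjoint q) (q (x : H)) := by
        rw [ContinuousLinearMap.star_eq_adjoint]; rfl
      rw [h3, h2, ContinuousLinearMap.adjoint_inner_right]
      exact inner_self_eq_norm_sq_to_K (𝕜 := ℂ) _
    have hsumC : ∑ i, ((‖q (((stdOrthonormalBasis ℂ M) i : M) : H)‖ : ℂ)) ^ 2 = 0 := by
      calc ∑ i, ((‖q (((stdOrthonormalBasis ℂ M) i : M) : H)‖ : ℂ)) ^ 2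
          = ∑ i, ⟪(stdOrthonormalBasis ℂ M) i,
              (r (star q * q)) ((stdOrthonormalBasis ℂ M) i)⟫_ℂ :=
            Finset.sum_congr rfl fun i _ => (heach i).symm
      _ = LinearMap.trace ℂ M (r (star q * q)) := (trace_eq_sum_inner' _).symm
      _ = 0 := htrace0
    have hsum : ∑ i, (‖q (((stdOrthonormalBasis ℂ M) i : M) : H)‖ : ℝ) ^ 2 = 0 := by
      exact_mod_cast hsumC
    have hzero_each : ∀ i, q (((stdOrthonormalBasis ℂ M) i : M) : H) = 0 := by
      have hnn : ∀ i ∈ Finset.univ,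
          (0:ℝ) ≤ (‖q (((stdOrthonormalBasis ℂ M) i : M) : H)‖ : ℝ) ^ 2 :=
        fun i _ => sq_nonneg _
      intro i
      have h4 := (Finset.sum_eq_zero_iff_of_nonneg hnn).mp hsum i (Finset.mem_univ i)
      have h5 : ‖q (((stdOrthonormalBasis ℂ M) i : M) : H)‖ = 0 := by
        nlinarith [norm_nonneg (q (((stdOrthonormalBasis ℂ M) i : M) : H))]
      exact norm_eq_zero.mp h5
    intro x
    have hx : x = ∑ i, ⟪(stdOrthonormalBasis ℂ M) i, x⟫_ℂ • (stdOrthonormalBasis ℂ M) i :=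
      ((stdOrthonormalBasis ℂ M).sum_repr' x).symm
    rw [hx]
    push_cast
    rw [map_sum]
    refine Finset.sum_eq_zero fun i _ => ?_
    rw [map_smul, hzero_each i, smul_zero]
  -- conclude q = 0
  have hq_eq : q = 0 := by
    have hqp : q * p = q := by
      calc q * p = (1 - p) * star a * (p * p) := by rw [hqdef]; noncomm_ring
      _ = q := by rw [hpp, hqdef]
    ext y
    have h1 : q (p y) = 0 := hq0 ⟨p y, LinearMap.mem_range_self _ _⟩
    have h2 : q (p y) = q y := by
      have := congrFun (congrArg DFunLike.coe hqp) y
      simpa using this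
    simp [← h2, h1]
  -- star a * p = p * star a * p, so p * a = p * a * p = a * p
  have hstarap : star a * p = p * star a * p := by
    have h6 : star a * p - p * star a * p = q := by rw [hqdef]; noncomm_ring
    rw [hq_eq] at h6
    exact sub_eq_zero.mp h6
  have hfinal : p * a = p * a * p := by
    have := congrArg star hstarap
    simpa [star_mul, hp, star_star, mul_assoc] using this
  rw [h, ← hfinal]
end
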